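/- (Dadarlat–Guentner criterion, sufficiency direction) Let A be a metric space such that for every ε > 0 and R > 0 there is a map ζ : A → S(ℓ₂) (the unit sphere of Hilbert space) with: (i) d(x,y) ≤ R implies ‖ζ(x) − ζ(y)‖ ≤ ε, and (ii) lim_{t→∞} inf{‖ζ(x)−ζ(y)‖ : d(x,y) ≥ t} = √2. Then A admits a coarse embedding into ℓ₂. -/

import Mathlib

/-- The separable Hilbert space `ℓ₂`. -/
noncomputable abbrev ellTwo : Type := lp (fun _ : ℕ => ℝ) 2

/-!
Apply the hypothesis with `ε = 2⁻ⁿ` and `R = n + 1` to get maps `ζₙ`; since `√2 > 1`, each `ζₙ`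
has a threshold `Tₙ` beyond which `‖ζₙ x - ζₙ y‖ ≥ 1`. Put `F x = ⨁ₙ (ζₙ x - ζₙ x₀)`, so that
`‖F x - F y‖² = ∑ₙ ‖ζₙ x - ζₙ y‖²`. The terms with `n ≥ d(x, y)` are at most `2⁻ⁿ`, and the others
at most `4`, which bounds the sum by `4 ⌈d(x, y)⌉ + 2`; from below, each `n` with `Tₙ ≤ d(x, y)`
contributes at least `1`, and the number of such `n` tends to infinity with `d(x, y)`.
-/

open Filter Topology Finset

namespace ellTwo

lemma hasSum_sq (u : ellTwo) : HasSum (fun k => u k ^ 2) (‖u‖ ^ 2) := by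
  simpa [Real.norm_eq_abs] using lp.hasSum_norm (p := 2) (by norm_num) u

lemma hasSum_sq_unpair {v : ℕ → ellTwo} (hv : Summable fun n => ‖v n‖ ^ 2) :
    HasSum (fun k : ℕ => v k.unpair.1 k.unpair.2 ^ 2) (∑' n, ‖v n‖ ^ 2) := by
  set w : ℕ × ℕ → ℝ := fun p => v p.1 p.2 ^ 2
  have hrow (n : ℕ) : HasSum (fun m => w (n, m)) (‖v n‖ ^ 2) := hasSum_sq (v n)
  have hw : Summable w := by
    refine (summable_prod_of_nonneg fun p => sq_nonneg _).2 ⟨fun n => (hrow n).summable, ?_⟩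
    convert hv using 2 with n
    exact (hrow n).tsum_eq
  have htsum : ∑' p, w p = ∑' n, ‖v n‖ ^ 2 :=
    (hw.hasSum.prod_fiberwise hrow).tsum_eq.symm
  rw [← htsum]
  exact (Nat.pairEquiv.symm.hasSum_iff (f := w)).2 hw.hasSum

/-- `⨁ₙ ℓ₂ ≅ ℓ₂`, realised by reindexing along `Nat.unpair : ℕ ≃ ℕ × ℕ`. -/
noncomputable def interleave (v : ℕ → ellTwo) (hv : Summable fun n => ‖v n‖ ^ 2) : ellTwo :=
  ⟨fun k : ℕ => v k.unpair.1 k.unpair.2, memℓp_gen <| by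
    simpa [Real.norm_eq_abs] using (hasSum_sq_unpair hv).summable⟩

lemma norm_interleave_sq {v : ℕ → ellTwo} (hv : Summable fun n => ‖v n‖ ^ 2) :
    ‖interleave v hv‖ ^ 2 = ∑' n, ‖v n‖ ^ 2 :=
  (hasSum_sq _).unique (hasSum_sq_unpair hv)

lemma interleave_sub_interleave {v w : ℕ → ellTwo} (hv : Summable fun n => ‖v n‖ ^ 2)
    (hw : Summable fun n => ‖w n‖ ^ 2) (hvw : Summable fun n => ‖v n - w n‖ ^ 2) :
    interleave v hv - interleave w hw = interleave (fun n => v n - w n) hvw := by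
  ext k
  simp only [interleave, AddSubgroupClass.coe_sub, PreLp.sub_apply]
  rfl

end ellTwo

lemma tsum_le_of_le_of_tail_le_geometric {b : ℕ → ℝ} {C : ℝ} {N : ℕ} (hs : Summable b)
    (hb : ∀ n, b n ≤ C) (htail : ∀ n, N ≤ n → b n ≤ (1 / 2) ^ n) :
    ∑' n, b n ≤ N * C + 2 := by
  rw [← hs.sum_add_tsum_nat_add N]
  have hhead : ∑ n ∈ range N, b n ≤ N * C := by
    simpa using sum_le_card_nsmul (range N) b C fun n _ => hb n
  have htail_sum : ∑' n, b (n + N) ≤ 2 := calc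
    ∑' n, b (n + N) ≤ ∑' n : ℕ, (1 / 2 : ℝ) ^ n :=
      ((summable_nat_add_iff N).2 hs).tsum_le_tsum
        (fun n => (htail _ (by omega)).trans
          (pow_le_pow_of_le_one (by norm_num) (by norm_num) (by omega)))
        summable_geometric_two
    _ = 2 := tsum_geometric_two
  linarith

noncomputable def thresholdCount (T : ℕ → ℝ) (t : ℝ) : ℕ := #{n ∈ range ⌊t⌋₊ | T n ≤ t}

lemma tendsto_thresholdCount_atTop (T : ℕ → ℝ) : Tendsto (thresholdCount T) atTop atTop := by
  refine tendsto_atTop.2 fun M => ?_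
  have hT : ∀ᶠ t in atTop, ∀ n ∈ range M, T n ≤ t :=
    (eventually_all_finset _).2 fun n _ => eventually_ge_atTop (T n)
  filter_upwards [hT, eventually_ge_atTop (M : ℝ)] with t hT hM
  calc M = #(range M) := (card_range M).symm
    _ ≤ thresholdCount T t := card_le_card fun n hn =>
      mem_filter.2 ⟨mem_range.2 ((mem_range.1 hn).trans_le (Nat.le_floor hM)), hT n hn⟩

lemma thresholdCount_le_tsum {T b : ℕ → ℝ} {t : ℝ} (hs : Summable b) (h0 : ∀ n, 0 ≤ b n)
    (h1 : ∀ n, T n ≤ t → 1 ≤ b n) : (thresholdCount T t : ℝ) ≤ ∑' n, b n := calc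
  (thresholdCount T t : ℝ) = ∑ n ∈ range ⌊t⌋₊ with T n ≤ t, 1 := by simp [thresholdCount]
  _ ≤ ∑ n ∈ range ⌊t⌋₊ with T n ≤ t, b n := sum_le_sum fun n hn => h1 n (mem_filter.1 hn).2
  _ ≤ ∑' n, b n := hs.sum_le_tsum _ fun n _ => h0 n

lemma exists_le_norm_sub_of_tendsto_sInf {α E : Type*} [Dist α] [SeminormedAddCommGroup E]
    {ζ : α → E} {c L : ℝ} (hc : c < L)
    (h : Tendsto (fun t => sInf {d | ∃ x y, t ≤ dist x y ∧ d = ‖ζ x - ζ y‖}) atTop (𝓝 L)) :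
    ∃ T, ∀ x y, T ≤ dist x y → c ≤ ‖ζ x - ζ y‖ := by
  obtain ⟨T, hT⟩ := eventually_atTop.1 (h.eventually (lt_mem_nhds hc))
  refine ⟨T, fun x y hxy => (hT T le_rfl).le.trans (csInf_le ⟨0, ?_⟩ ⟨x, y, hxy, rfl⟩)⟩
  rintro _ ⟨x, y, -, rfl⟩
  exact norm_nonneg _

section SequenceOfMaps

variable {A : Type*} [Dist A] {ζ : ℕ → A → ellTwo}

lemma sq_norm_sub_le_of_ceil_dist_le
    (hnear : ∀ (n : ℕ) x y, dist x y ≤ n + 1 → ‖ζ n x - ζ n y‖ ≤ (1 / 2) ^ n)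
    {x y : A} {n : ℕ} (hn : ⌈dist x y⌉₊ ≤ n) : ‖ζ n x - ζ n y‖ ^ 2 ≤ (1 / 2) ^ n := by
  have hdist : dist x y ≤ n + 1 := by
    have : (⌈dist x y⌉₊ : ℝ) ≤ n := by exact_mod_cast hn
    linarith [Nat.le_ceil (dist x y)]
  exact (pow_le_pow_left₀ (norm_nonneg _) (hnear n x y hdist) 2).trans
    (sq_le (by positivity) (pow_le_one₀ (by norm_num) (by norm_num)))

lemma summable_sq_norm_sub
    (hnear : ∀ (n : ℕ) x y, dist x y ≤ n + 1 → ‖ζ n x - ζ n y‖ ≤ (1 / 2) ^ n) (x y : A) :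
    Summable fun n => ‖ζ n x - ζ n y‖ ^ 2 :=
  summable_geometric_two.of_norm_bounded_eventually_nat <| eventually_atTop.2
    ⟨⌈dist x y⌉₊, fun n hn => by
      rw [Real.norm_of_nonneg (by positivity)]
      exact sq_norm_sub_le_of_ceil_dist_le hnear hn⟩

lemma tsum_sq_norm_sub_le (hbdd : ∀ n x y, ‖ζ n x - ζ n y‖ ≤ 2)
    (hnear : ∀ (n : ℕ) x y, dist x y ≤ n + 1 → ‖ζ n x - ζ n y‖ ≤ (1 / 2) ^ n) (x y : A) :
    ∑' n, ‖ζ n x - ζ n y‖ ^ 2 ≤ ⌈dist x y⌉₊ * 4 + 2 :=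
  tsum_le_of_le_of_tail_le_geometric (summable_sq_norm_sub hnear x y)
    (fun n => by nlinarith [hbdd n x y, norm_nonneg (ζ n x - ζ n y)])
    fun _ hn => sq_norm_sub_le_of_ceil_dist_le hnear hn

noncomputable def sumEmbedding
    (hnear : ∀ (n : ℕ) x y, dist x y ≤ n + 1 → ‖ζ n x - ζ n y‖ ≤ (1 / 2) ^ n) (x₀ x : A) : ellTwo :=
  ellTwo.interleave (fun n => ζ n x - ζ n x₀) (summable_sq_norm_sub hnear x x₀)

lemma norm_sumEmbedding_sub_sq
    (hnear : ∀ (n : ℕ) x y, dist x y ≤ n + 1 → ‖ζ n x - ζ n y‖ ≤ (1 / 2) ^ n) (x₀ x y : A) :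
    ‖sumEmbedding hnear x₀ x - sumEmbedding hnear x₀ y‖ ^ 2 = ∑' n, ‖ζ n x - ζ n y‖ ^ 2 := by
  have hsum : Summable fun n => ‖(ζ n x - ζ n x₀) - (ζ n y - ζ n x₀)‖ ^ 2 := by
    simpa only [sub_sub_sub_cancel_right] using summable_sq_norm_sub hnear x y
  rw [sumEmbedding, sumEmbedding, ellTwo.interleave_sub_interleave _ _ hsum,
    ellTwo.norm_interleave_sq]
  simp only [sub_sub_sub_cancel_right]

theorem exists_coarseEmbedding_of_near_far (x₀ : A) {T : ℕ → ℝ}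
    (hbdd : ∀ n x y, ‖ζ n x - ζ n y‖ ≤ 2)
    (hnear : ∀ (n : ℕ) x y, dist x y ≤ n + 1 → ‖ζ n x - ζ n y‖ ≤ (1 / 2) ^ n)
    (hfar : ∀ n x y, T n ≤ dist x y → 1 ≤ ‖ζ n x - ζ n y‖) :
    ∃ F : A → ellTwo, ∃ ρ₁ ρ₂ : ℝ → ℝ,
      (∀ x y : A, ρ₁ (dist x y) ≤ ‖F x - F y‖ ∧ ‖F x - F y‖ ≤ ρ₂ (dist x y)) ∧
      Tendsto ρ₁ atTop atTop := by
  refine ⟨sumEmbedding hnear x₀, fun t => √(thresholdCount T t), fun t => √(⌈t⌉₊ * 4 + 2),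
    fun x y => ⟨?_, ?_⟩, Real.tendsto_sqrt_atTop.comp
      (tendsto_natCast_atTop_atTop.comp (tendsto_thresholdCount_atTop T))⟩
  · rw [Real.sqrt_le_left (norm_nonneg _), norm_sumEmbedding_sub_sq]
    exact thresholdCount_le_tsum (summable_sq_norm_sub hnear x y) (fun n => sq_nonneg _)
      fun n hn => one_le_pow₀ (hfar n x y hn)
  · rw [Real.le_sqrt (norm_nonneg _) (by positivity), norm_sumEmbedding_sub_sq]
    exact tsum_sq_norm_sub_le hbdd hnear x y

end SequenceOfMaps

/-- Dadarlat–Guentner criterion (sufficiency): if for every `ε > 0` and `R > 0` there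
is a map `ζ : A → S(ℓ₂)` such that `d(x,y) ≤ R ⟹ ‖ζ(x) − ζ(y)‖ ≤ ε` and
`lim_{t→∞} inf{‖ζ(x) − ζ(y)‖ : d(x,y) ≥ t} = √2`, then `A` coarsely embeds into
`ℓ₂`. -/
theorem coarseEmbedding_of_dadarlat_guentner {A : Type*} [MetricSpace A]
    (h : ∀ ε : ℝ, 0 < ε → ∀ R : ℝ, 0 < R → ∃ ζ : A → ellTwo,
      (∀ x : A, ‖ζ x‖ = 1) ∧
      (∀ x y : A, dist x y ≤ R → ‖ζ x - ζ y‖ ≤ ε) ∧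
      Filter.Tendsto
        (fun t : ℝ => sInf {d : ℝ | ∃ x y : A, t ≤ dist x y ∧ d = ‖ζ x - ζ y‖})
        Filter.atTop (nhds (Real.sqrt 2))) :
    ∃ F : A → ellTwo, ∃ ρ₁ ρ₂ : ℝ → ℝ,
      (∀ x y : A, ρ₁ (dist x y) ≤ ‖F x - F y‖ ∧ ‖F x - F y‖ ≤ ρ₂ (dist x y)) ∧
      Filter.Tendsto ρ₁ Filter.atTop Filter.atTop := by
  rcases isEmpty_or_nonempty A with hA | ⟨⟨x₀⟩⟩
  · exact ⟨isEmptyElim, id, id, isEmptyElim, tendsto_id⟩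
  choose ζ hζ_norm hζ_near hζ_far using fun n : ℕ =>
    h ((1 / 2) ^ n) (by positivity) (n + 1) (by positivity)
  choose T hT using fun n => exists_le_norm_sub_of_tendsto_sInf Real.one_lt_sqrt_two (hζ_far n)
  have hbdd (n : ℕ) (x y : A) : ‖ζ n x - ζ n y‖ ≤ 2 := by
    linarith [norm_sub_le (ζ n x) (ζ n y), hζ_norm n x, hζ_norm n y]
  exact exists_coarseEmbedding_of_near_far x₀ hbdd hζ_near hT
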